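/- arXiv:1005.4461 — 6 statements merged into one kernel-verified Lean document; each statement's English description precedes it below -/
import Mathlib

section
/- In the allowable multiplicity-type setting, for every error pattern x ∈ {0,1,…,ℓ}^N and every erasure pattern x̂ ∈ {1,…,T}^N, the score and cost satisfy 2C ≥ (μ+1)·S. -/
open Finset

/-- The minimum of `f` over the finite set `s` of indices, with the convention that the
minimum over the empty set is `0`. -/
def minOv (s : Finset ℕ) (f : ℕ → ℕ) : ℕ :=
  if h : s.Nonempty then s.inf' h f else 0

/-- The multiplicity type `(m 1, …, m ℓ)` is *allowable* for maximum multiplicity `μ`: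
`∑_{j=1}^ℓ m j ≤ μ` and
`∑_{j=1}^ℓ m j (μ - m j) ≤ (μ+1) (#{j : m j ≠ 0} - 1) min_{j : m j ≠ 0} m j`. -/
def Allowable (ℓ μ : ℕ) (m : ℕ → ℕ) : Prop :=
  (∑ j ∈ Finset.Icc 1 ℓ, m j) ≤ μ ∧
    (∑ j ∈ Finset.Icc 1 ℓ, (m j : ℤ) * ((μ : ℤ) - (m j : ℤ)))
      ≤ ((μ : ℤ) + 1) * ((((Finset.Icc 1 ℓ).filter fun j => m j ≠ 0).card : ℤ) - 1)
          * (minOv ((Finset.Icc 1 ℓ).filter fun j => m j ≠ 0) m : ℤ)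

/-- The score `S = ∑_{i : x i ≥ 1} m (x i) (x̂ i)` of an error pattern `x` and an erasure
pattern `x̂` (positions indexed by `i ∈ {1,…,N}`). -/
def score (N : ℕ) (m : ℕ → ℕ → ℕ) (x xhat : ℕ → ℕ) : ℚ :=
  ∑ i ∈ Finset.Icc 1 N, if 1 ≤ x i then (m (x i) (xhat i) : ℚ) else 0

/-- The cost `C = (1/2) ∑_{i=1}^N ∑_{j=1}^ℓ m j (x̂ i) (m j (x̂ i) + 1)`. -/
def cost (N ℓ : ℕ) (m : ℕ → ℕ → ℕ) (xhat : ℕ → ℕ) : ℚ :=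
  (1 / 2) * ∑ i ∈ Finset.Icc 1 N, ∑ j ∈ Finset.Icc 1 ℓ,
    (m j (xhat i) : ℚ) * ((m j (xhat i) : ℚ) + 1)

/-- `ρ_{k,a} = μ(2a+1-μ)/(a(a+1)) + ∑_{j=1}^ℓ m_{j,k}(m_{j,k}+1)/(a(a+1))`. -/
def rho (μ ℓ : ℕ) (m : ℕ → ℕ → ℕ) (a k : ℕ) : ℚ :=
  (μ : ℚ) * (2 * (a : ℚ) + 1 - (μ : ℚ)) / ((a : ℚ) * ((a : ℚ) + 1)) +
    ∑ j ∈ Finset.Icc 1 ℓ, (m j k : ℚ) * ((m j k : ℚ) + 1) / ((a : ℚ) * ((a : ℚ) + 1))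

/-- The distortion measure `δ_a(0,k) = ρ_{k,a}` and `δ_a(j,k) = ρ_{k,a} - 2 m_{j,k}/a`
for `1 ≤ j ≤ ℓ`. -/
def deltaA (μ ℓ : ℕ) (m : ℕ → ℕ → ℕ) (a j k : ℕ) : ℚ :=
  if j = 0 then rho μ ℓ m a k else rho μ ℓ m a k - 2 * (m j k : ℚ) / (a : ℚ)

/-- The distortion `d_a(x, x̂) = ∑_{i=1}^N δ_a(x i, x̂ i)`. -/
def distA (N μ ℓ : ℕ) (m : ℕ → ℕ → ℕ) (a : ℕ) (x xhat : ℕ → ℕ) : ℚ :=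
  ∑ i ∈ Finset.Icc 1 N, deltaA μ ℓ m a (x i) (xhat i)

lemma key_ineq (ℓ μ : ℕ) (m : ℕ → ℕ) (h : Allowable ℓ μ m) (j' : ℕ)
    (hj' : j' ∈ Finset.Icc 1 ℓ) :
    ((μ : ℤ) + 1) * (m j' : ℤ) ≤ ∑ j ∈ Finset.Icc 1 ℓ, (m j : ℤ) * ((m j : ℤ) + 1) := by
  by_cases hz : m j' = 0
  · rw [hz]
    simp only [Nat.cast_zero, mul_zero]
    exact Finset.sum_nonneg fun j _ => mul_nonneg (by positivity) (by positivity)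
  · set s := (Finset.Icc 1 ℓ).filter (fun j => m j ≠ 0) with hs
    have hj's : j' ∈ s := Finset.mem_filter.2 ⟨hj', hz⟩
    have hne : s.Nonempty := ⟨j', hj's⟩
    have hcard : 1 ≤ s.card := Finset.card_pos.2 hne
    have hmin : minOv s m = s.inf' hne m := by rw [minOv, dif_pos hne]
    set μm := s.inf' hne m with hμm
    -- t ≥ m j' + (s.card - 1) * μm in ℕ
    have hts : m j' + (s.card - 1) * μm ≤ ∑ j ∈ Finset.Icc 1 ℓ, m j := by
      have h1 : ∑ j ∈ s, m j ≤ ∑ j ∈ Finset.Icc 1 ℓ, m j :=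
        Finset.sum_le_sum_of_subset (Finset.filter_subset _ _)
      have h2 : m j' + ∑ j ∈ s.erase j', m j = ∑ j ∈ s, m j :=
        Finset.add_sum_erase s m hj's
      have h3 : (s.erase j').card * μm ≤ ∑ j ∈ s.erase j', m j := by
        have := Finset.card_nsmul_le_sum (s.erase j') m μm
          (fun j hj => Finset.inf'_le m (Finset.mem_of_mem_erase hj))
        simpa [smul_eq_mul] using this
      have h4 : (s.erase j').card = s.card - 1 := Finset.card_erase_of_mem hj's
      rw [h4] at h3
      omega
    have htsZ : (m j' : ℤ) + ((s.card : ℤ) - 1) * (μm : ℤ)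
        ≤ (∑ j ∈ Finset.Icc 1 ℓ, m j : ℤ) := by
      have := (Int.ofNat_le.mpr hts)
      push_cast at this ⊢
      have hc : ((s.card - 1 : ℕ) : ℤ) = (s.card : ℤ) - 1 := by
        omega
      rw [← hc]
      exact_mod_cast hts
    have hA := h.2
    rw [← hs, hmin] at hA
    have hid : ∑ j ∈ Finset.Icc 1 ℓ, (m j : ℤ) * ((m j : ℤ) + 1)
        = ((μ : ℤ) + 1) * (∑ j ∈ Finset.Icc 1 ℓ, (m j : ℤ))
          - ∑ j ∈ Finset.Icc 1 ℓ, (m j : ℤ) * ((μ : ℤ) - (m j : ℤ)) := by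
      rw [Finset.mul_sum, ← Finset.sum_sub_distrib]
      exact Finset.sum_congr rfl fun j _ => by ring
    have hsum : (∑ j ∈ Finset.Icc 1 ℓ, m j : ℤ) = ∑ j ∈ Finset.Icc 1 ℓ, (m j : ℤ) := by
      push_cast; ring
    rw [hid, ← hsum]
    have hμ1 : (0 : ℤ) ≤ (μ : ℤ) + 1 := by positivity
    nlinarith [hA, htsZ, hμ1]

/-- In the allowable multiplicity-type setting (with `T` allowable
multiplicity types `m · k`, type `1` being `(μ,0,…,0)`), for every error pattern
`x ∈ {0,…,ℓ}^N` and every erasure pattern `x̂ ∈ {1,…,T}^N`, the score and cost satisfy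
`2C ≥ (μ+1)·S`. -/
theorem stmt_4 (μ ℓ T N : ℕ) (hμ : 1 ≤ μ) (hℓ : 1 ≤ ℓ) (hT : 1 ≤ T) (hN : 1 ≤ N)
    (m : ℕ → ℕ → ℕ)
    (hallow : ∀ k ∈ Finset.Icc 1 T, Allowable ℓ μ (fun j => m j k))
    (htype1 : ∀ j ∈ Finset.Icc 1 ℓ, m j 1 = if j = 1 then μ else 0)
    (x : ℕ → ℕ) (hx : ∀ i ∈ Finset.Icc 1 N, x i ≤ ℓ)
    (xhat : ℕ → ℕ) (hxhat : ∀ i ∈ Finset.Icc 1 N, xhat i ∈ Finset.Icc 1 T) :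
    ((μ : ℚ) + 1) * score N m x xhat ≤ 2 * cost N ℓ m xhat := by
  have h2c : 2 * cost N ℓ m xhat = ∑ i ∈ Finset.Icc 1 N, ∑ j ∈ Finset.Icc 1 ℓ,
      (m j (xhat i) : ℚ) * ((m j (xhat i) : ℚ) + 1) := by
    rw [cost]; ring
  rw [h2c, score, Finset.mul_sum]
  apply Finset.sum_le_sum
  intro i hi
  by_cases hxi : 1 ≤ x i
  · rw [if_pos hxi]
    have hk := hallow (xhat i) (hxhat i hi)
    have hjm : x i ∈ Finset.Icc 1 ℓ := Finset.mem_Icc.2 ⟨hxi, hx i hi⟩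
    have := key_ineq ℓ μ (fun j => m j (xhat i)) hk (x i) hjm
    exact_mod_cast this
  · rw [if_neg hxi, mul_zero]
    exact Finset.sum_nonneg fun j _ => mul_nonneg (by positivity) (by positivity)
end

section
/- In the allowable multiplicity-type setting, suppose an integer a ≥ 0 satisfies the ASD decoding conditions (a+1)·(S − (a/2)(K−1)) > C and S ≤ (a+1)(K−1) for some error pattern x ∈ {0,1,…,ℓ}^N and erasure pattern x̂ ∈ {1,…,T}^N with score S and cost C. Then a ≥ μ. -/
open Finset

/-- Key consequence of allowability: `(μ+1) m_{j0} ≤ ∑_j m_j (m_j + 1)`. -/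
lemma allowable_key (ℓ μ : ℕ) (m : ℕ → ℕ) (h : Allowable ℓ μ m) (j0 : ℕ)
    (hj0 : j0 ∈ Finset.Icc 1 ℓ) :
    ((μ : ℤ) + 1) * (m j0 : ℤ) ≤ ∑ j ∈ Finset.Icc 1 ℓ, (m j : ℤ) * ((m j : ℤ) + 1) := by
  classical
  set F := (Finset.Icc 1 ℓ).filter (fun j => m j ≠ 0) with hFdef
  set t := minOv F m with htdef
  have h2 := h.2
  have hseq : ∑ j ∈ Finset.Icc 1 ℓ, (m j : ℤ) = ∑ j ∈ F, (m j : ℤ) := by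
    rw [hFdef, Finset.sum_filter]
    refine Finset.sum_congr rfl fun j _ => ?_
    by_cases hj : m j = 0 <;> simp [hj]
  have hid : ∑ j ∈ Finset.Icc 1 ℓ, (m j : ℤ) * ((m j : ℤ) + 1)
      = ((μ : ℤ) + 1) * (∑ j ∈ Finset.Icc 1 ℓ, (m j : ℤ))
        - ∑ j ∈ Finset.Icc 1 ℓ, (m j : ℤ) * ((μ : ℤ) - (m j : ℤ)) := by
    rw [Finset.mul_sum, ← Finset.sum_sub_distrib]
    exact Finset.sum_congr rfl fun j _ => by ring
  have hmain : (m j0 : ℤ) + ((F.card : ℤ) - 1) * (t : ℤ) ≤ ∑ j ∈ F, (m j : ℤ) := by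
    by_cases hF : F.Nonempty
    · have htval : t = F.inf' hF m := by rw [htdef, minOv, dif_pos hF]
      have htle : ∀ j ∈ F, (t : ℤ) ≤ (m j : ℤ) := by
        intro j hj; exact_mod_cast htval ▸ Finset.inf'_le m hj
      have hcard : 1 ≤ F.card := Finset.card_pos.mpr hF
      by_cases hj0F : j0 ∈ F
      · have herase : ∑ j ∈ F, (m j : ℤ)
            = (m j0 : ℤ) + ∑ j ∈ F.erase j0, (m j : ℤ) :=
          (Finset.add_sum_erase F _ hj0F).symm
        have hlb : ((F.erase j0).card : ℤ) * (t : ℤ) ≤ ∑ j ∈ F.erase j0, (m j : ℤ) := by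
          have := Finset.card_nsmul_le_sum (F.erase j0) (fun j => (m j : ℤ)) (t : ℤ)
            (fun j hj => htle j (Finset.mem_of_mem_erase hj))
          simpa [nsmul_eq_mul] using this
        have hc : ((F.erase j0).card : ℤ) = (F.card : ℤ) - 1 := by
          rw [Finset.card_erase_of_mem hj0F]
          push_cast [Nat.cast_sub hcard]
          ring
        rw [herase]; rw [hc] at hlb; linarith
      · have hm0 : m j0 = 0 := by
          by_contra hne
          exact hj0F (Finset.mem_filter.mpr ⟨hj0, hne⟩)
        have hlb : (F.card : ℤ) * (t : ℤ) ≤ ∑ j ∈ F, (m j : ℤ) := by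
          have := Finset.card_nsmul_le_sum F (fun j => (m j : ℤ)) (t : ℤ) htle
          simpa [nsmul_eq_mul] using this
        have ht0 : (0 : ℤ) ≤ (t : ℤ) := Int.ofNat_nonneg t
        rw [hm0]
        push_cast
        nlinarith
    · have hFe : F = ∅ := Finset.not_nonempty_iff_eq_empty.mp hF
      have ht0 : t = 0 := by rw [htdef, minOv, dif_neg hF]
      have hm0 : m j0 = 0 := by
        by_contra hne
        exact hF ⟨j0, Finset.mem_filter.mpr ⟨hj0, hne⟩⟩
      simp [hFe, ht0, hm0]
  have hmul : ((μ : ℤ) + 1) * ((m j0 : ℤ) + ((F.card : ℤ) - 1) * (t : ℤ))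
      ≤ ((μ : ℤ) + 1) * (∑ j ∈ F, (m j : ℤ)) :=
    mul_le_mul_of_nonneg_left hmain (by positivity)
  rw [hid, hseq]
  nlinarith [h2]

/-- In the allowable multiplicity-type setting, if an integer `a ≥ 0`
satisfies the ASD decoding conditions `(a+1)(S - (a/2)(K-1)) > C` and
`S ≤ (a+1)(K-1)` for some error pattern `x ∈ {0,…,ℓ}^N` and erasure pattern
`x̂ ∈ {1,…,T}^N` with score `S` and cost `C`, then `a ≥ μ`. -/
theorem stmt_5 (μ ℓ T N K : ℕ) (hμ : 1 ≤ μ) (hℓ : 1 ≤ ℓ) (hT : 1 ≤ T) (hN : 1 ≤ N)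
    (hK : 1 ≤ K) (m : ℕ → ℕ → ℕ)
    (hallow : ∀ k ∈ Finset.Icc 1 T, Allowable ℓ μ (fun j => m j k))
    (htype1 : ∀ j ∈ Finset.Icc 1 ℓ, m j 1 = if j = 1 then μ else 0)
    (x : ℕ → ℕ) (hx : ∀ i ∈ Finset.Icc 1 N, x i ≤ ℓ)
    (xhat : ℕ → ℕ) (hxhat : ∀ i ∈ Finset.Icc 1 N, xhat i ∈ Finset.Icc 1 T)
    (a : ℕ)
    (hcond : cost N ℓ m xhat
      < ((a : ℚ) + 1) * (score N m x xhat - ((a : ℚ) / 2) * ((K : ℚ) - 1)))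
    (hS : score N m x xhat ≤ ((a : ℚ) + 1) * ((K : ℚ) - 1)) :
    μ ≤ a := by
  classical
  set S := score N m x xhat with hSdef
  set C := cost N ℓ m xhat with hCdef
  -- per-position inequality, summed: (μ+1) S ≤ 2 C
  have hkey : ((μ : ℚ) + 1) * S ≤ 2 * C := by
    have hper : ∀ i ∈ Finset.Icc 1 N,
        ((μ : ℚ) + 1) * (if 1 ≤ x i then (m (x i) (xhat i) : ℚ) else 0)
          ≤ ∑ j ∈ Finset.Icc 1 ℓ, (m j (xhat i) : ℚ) * ((m j (xhat i) : ℚ) + 1) := by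
      intro i hi
      by_cases hxi : 1 ≤ x i
      · rw [if_pos hxi]
        have hj0 : x i ∈ Finset.Icc 1 ℓ := Finset.mem_Icc.mpr ⟨hxi, hx i hi⟩
        have := allowable_key ℓ μ (fun j => m j (xhat i)) (hallow (xhat i) (hxhat i hi))
          (x i) hj0
        exact_mod_cast this
      · rw [if_neg hxi, mul_zero]
        apply Finset.sum_nonneg
        intro j _
        positivity
    have hsum : ((μ : ℚ) + 1) * S
        ≤ ∑ i ∈ Finset.Icc 1 N, ∑ j ∈ Finset.Icc 1 ℓ,
            (m j (xhat i) : ℚ) * ((m j (xhat i) : ℚ) + 1) := by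
      rw [hSdef, score, Finset.mul_sum]
      exact Finset.sum_le_sum hper
    have h2C : 2 * C = ∑ i ∈ Finset.Icc 1 N, ∑ j ∈ Finset.Icc 1 ℓ,
        (m j (xhat i) : ℚ) * ((m j (xhat i) : ℚ) + 1) := by
      rw [hCdef, cost]; ring
    rw [h2C]; exact hsum
  have hSnn : (0 : ℚ) ≤ S := by
    rw [hSdef, score]
    apply Finset.sum_nonneg
    intro i _
    split <;> positivity
  have ha0 : (0 : ℚ) ≤ (a : ℚ) := Nat.cast_nonneg a
  have h3 : (a : ℚ) * S ≤ (a : ℚ) * (((a : ℚ) + 1) * ((K : ℚ) - 1)) :=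
    mul_le_mul_of_nonneg_left hS ha0
  -- (μ+1) S < (a+2) S
  have hlt : ((μ : ℚ) + 1) * S < ((a : ℚ) + 2) * S := by nlinarith [hcond, hkey]
  have hμa : (μ : ℚ) < (a : ℚ) + 1 := by
    by_contra hcon
    push_neg at hcon
    have : ((a : ℚ) + 2) * S ≤ ((μ : ℚ) + 1) * S :=
      mul_le_mul_of_nonneg_right (by linarith) hSnn
    linarith
  have : μ < a + 1 := by exact_mod_cast hμa
  omega
end

section
/- In the allowable multiplicity-type setting, let a ≥ μ be an integer. Then for every error pattern x ∈ {0,1,…,ℓ}^N and every erasure pattern x̂ ∈ {1,…,T}^N, the ASD decoding condition (a+1)·(S − (a/2)(K−1)) > C holds if and only if d_a(x,x̂) < D_a, where D_a = μ(2a+1−μ)·N/(a(a+1)) − K + 1. -/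
open Finset

/-! The distortion is an affine function of score and cost,
`d_a = μ(2a+1-μ)N/(a(a+1)) + 2C/(a(a+1)) - 2S/a`,
so `d_a < D_a` is the decoding condition multiplied by the positive factor `2/(a(a+1))`. -/

theorem rho_eq (μ ℓ : ℕ) (m : ℕ → ℕ → ℕ) (a k : ℕ) :
    rho μ ℓ m a k = ((μ : ℚ) * (2 * a + 1 - μ)
      + ∑ j ∈ Icc 1 ℓ, (m j k : ℚ) * (m j k + 1)) / (a * (a + 1)) := by
  rw [rho, ← sum_div, add_div]

theorem deltaA_eq (μ ℓ : ℕ) (m : ℕ → ℕ → ℕ) (a j k : ℕ) :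
    deltaA μ ℓ m a j k
      = rho μ ℓ m a k - 2 / a * (if 1 ≤ j then (m j k : ℚ) else 0) := by
  by_cases hj : j = 0
  · simp [deltaA, hj]
  · rw [deltaA, if_neg hj, if_pos (Nat.one_le_iff_ne_zero.mpr hj)]
    ring

theorem distA_eq (N μ ℓ : ℕ) (m : ℕ → ℕ → ℕ) (a : ℕ) (x xhat : ℕ → ℕ) :
    distA N μ ℓ m a x xhat
      = ((μ : ℚ) * (2 * a + 1 - μ) * N + 2 * cost N ℓ m xhat) / (a * (a + 1))
        - 2 / a * score N m x xhat := by
  simp only [distA, deltaA_eq, rho_eq, sum_sub_distrib, ← mul_sum, ← sum_div,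
    sum_add_distrib, sum_const, Nat.card_Icc, Nat.add_sub_cancel, nsmul_eq_mul, cost, score]
  ring

theorem stmt_6_general (μ ℓ N K : ℕ) (hμ : 1 ≤ μ) (m : ℕ → ℕ → ℕ)
    (a : ℕ) (ha : μ ≤ a)
    (x : ℕ → ℕ)
    (xhat : ℕ → ℕ) :
    (cost N ℓ m xhat
        < ((a : ℚ) + 1) * (score N m x xhat - ((a : ℚ) / 2) * ((K : ℚ) - 1)))
      ↔ distA N μ ℓ m a x xhat
          < (μ : ℚ) * (2 * (a : ℚ) + 1 - (μ : ℚ)) * (N : ℚ) / ((a : ℚ) * ((a : ℚ) + 1))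
            - (K : ℚ) + 1 := by
  have ha_pos : (0 : ℚ) < a := by exact_mod_cast hμ.trans ha
  have hrescale :
      (μ : ℚ) * (2 * a + 1 - μ) * N / (a * (a + 1)) - K + 1 - distA N μ ℓ m a x xhat
        = 2 / (a * (a + 1))
          * ((a + 1) * (score N m x xhat - a / 2 * (K - 1)) - cost N ℓ m xhat) := by
    rw [distA_eq]
    field_simp
    ring
  rw [← sub_pos, ← sub_pos (b := distA N μ ℓ m a x xhat), hrescale,
    mul_pos_iff_of_pos_left (by positivity)]

/-- In the allowable multiplicity-type setting, let `a ≥ μ` be an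
integer. Then for every error pattern `x ∈ {0,…,ℓ}^N` and every erasure pattern
`x̂ ∈ {1,…,T}^N`, the ASD decoding condition `(a+1)(S - (a/2)(K-1)) > C` holds iff
`d_a(x,x̂) < D_a`, where `D_a = μ(2a+1-μ)N/(a(a+1)) - K + 1`. -/
theorem stmt_6 (μ ℓ T N K : ℕ) (hμ : 1 ≤ μ) (hℓ : 1 ≤ ℓ) (hT : 1 ≤ T) (hN : 1 ≤ N)
    (hK : 1 ≤ K) (m : ℕ → ℕ → ℕ)
    (hallow : ∀ k ∈ Finset.Icc 1 T, Allowable ℓ μ (fun j => m j k))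
    (htype1 : ∀ j ∈ Finset.Icc 1 ℓ, m j 1 = if j = 1 then μ else 0)
    (a : ℕ) (ha : μ ≤ a)
    (x : ℕ → ℕ) (hx : ∀ i ∈ Finset.Icc 1 N, x i ≤ ℓ)
    (xhat : ℕ → ℕ) (hxhat : ∀ i ∈ Finset.Icc 1 N, xhat i ∈ Finset.Icc 1 T) :
    (cost N ℓ m xhat
        < ((a : ℚ) + 1) * (score N m x xhat - ((a : ℚ) / 2) * ((K : ℚ) - 1)))
      ↔ distA N μ ℓ m a x xhat
          < (μ : ℚ) * (2 * (a : ℚ) + 1 - (μ : ℚ)) * (N : ℚ) / ((a : ℚ) * ((a : ℚ) + 1))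
            - (K : ℚ) + 1 :=
  stmt_6_general μ ℓ N K hμ m a ha x xhat
end

section
/- In the allowable multiplicity-type setting, assume the rate condition K/N ≥ 1/N + μ(μ+3)/((μ+1)(μ+2)) (equivalently (K−1)/N ≥ μ(μ+3)/((μ+1)(μ+2))). If an integer a ≥ 0 satisfies (a+1)·(S − (a/2)(K−1)) > C and a(K−1) < S ≤ (a+1)(K−1) for some error pattern x ∈ {0,1,…,ℓ}^N and erasure pattern x̂ ∈ {1,…,T}^N with score S and cost C, then a = μ. -/
open Finset

lemma key_le (ℓ μ : ℕ) (m : ℕ → ℕ) (hA : Allowable ℓ μ m) (j₀ : ℕ)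
    (hj₀ : j₀ ∈ Finset.Icc 1 ℓ) :
    ((μ : ℤ) + 1) * (m j₀ : ℤ) ≤ ∑ j ∈ Finset.Icc 1 ℓ, (m j : ℤ) * ((m j : ℤ) + 1) := by
  rcases Nat.eq_zero_or_pos (m j₀) with h0 | hpos
  · rw [h0]
    simp only [Nat.cast_zero, mul_zero]
    apply Finset.sum_nonneg
    intro j _
    positivity
  · set F := (Finset.Icc 1 ℓ).filter (fun j => m j ≠ 0) with hF
    have hj₀F : j₀ ∈ F := Finset.mem_filter.mpr ⟨hj₀, hpos.ne'⟩
    have hne : F.Nonempty := ⟨j₀, hj₀F⟩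
    have hcard : 1 ≤ F.card := Finset.card_pos.mpr hne
    set mm : ℕ := F.inf' hne m with hmm
    have hmin : (minOv F m : ℤ) = (mm : ℤ) := by
      rw [minOv, dif_pos hne]
    -- sum over F of m ≥ m j₀ + (card - 1) * mm
    have hσF : (m j₀ : ℤ) + ((F.card : ℤ) - 1) * (mm : ℤ) ≤ ∑ j ∈ F, (m j : ℤ) := by
      rw [← Finset.add_sum_erase _ _ hj₀F]
      have h1 : ((F.erase j₀).card : ℤ) * (mm : ℤ) ≤ ∑ j ∈ F.erase j₀, (m j : ℤ) := by
        have := Finset.card_nsmul_le_sum (F.erase j₀) (fun j => (m j : ℤ)) (mm : ℤ)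
          (fun j hj => by show (mm:ℤ) ≤ (m j : ℤ); exact_mod_cast Finset.inf'_le m (Finset.mem_of_mem_erase hj))
        simpa [nsmul_eq_mul] using this
      have h2 : ((F.erase j₀).card : ℤ) = (F.card : ℤ) - 1 := by
        rw [Finset.card_erase_of_mem hj₀F]
        push_cast [Nat.cast_sub hcard]
        ring
      linarith [h1, h2 ▸ h1]
    -- sum over Icc ≥ sum over F
    have hσ : ∑ j ∈ F, (m j : ℤ) ≤ ∑ j ∈ Finset.Icc 1 ℓ, (m j : ℤ) :=
      Finset.sum_le_sum_of_subset_of_nonneg (Finset.filter_subset _ _)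
        (fun j _ _ => by positivity)
    -- allowability rearranged
    have hall2 := hA.2
    rw [hmin] at hall2
    have hsplit : ∑ j ∈ Finset.Icc 1 ℓ, (m j : ℤ) * ((μ : ℤ) - (m j : ℤ))
        = (μ : ℤ) * (∑ j ∈ Finset.Icc 1 ℓ, (m j : ℤ))
          - ∑ j ∈ Finset.Icc 1 ℓ, (m j : ℤ) * (m j : ℤ) := by
      rw [Finset.mul_sum, ← Finset.sum_sub_distrib]
      exact Finset.sum_congr rfl (fun j _ => by ring)
    have hsplit2 : ∑ j ∈ Finset.Icc 1 ℓ, (m j : ℤ) * ((m j : ℤ) + 1)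
        = (∑ j ∈ Finset.Icc 1 ℓ, (m j : ℤ) * (m j : ℤ))
          + ∑ j ∈ Finset.Icc 1 ℓ, (m j : ℤ) := by
      rw [← Finset.sum_add_distrib]
      exact Finset.sum_congr rfl (fun j _ => by ring)
    set σ := ∑ j ∈ Finset.Icc 1 ℓ, (m j : ℤ)
    set q := ∑ j ∈ Finset.Icc 1 ℓ, (m j : ℤ) * (m j : ℤ)
    rw [hsplit2]
    rw [hsplit] at hall2
    set t := ((F.card : ℤ) - 1) * (mm : ℤ) with ht
    have hσfull : (m j₀ : ℤ) + t ≤ σ := le_trans hσF hσ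
    have hμ0 : (0 : ℤ) ≤ (μ : ℤ) + 1 := by positivity
    nlinarith [mul_le_mul_of_nonneg_left hσfull hμ0, hall2]

lemma score_le (ℓ μ : ℕ) (m : ℕ → ℕ) (hA : Allowable ℓ μ m) (j₀ : ℕ)
    (hj₀ : j₀ ∈ Finset.Icc 1 ℓ) : m j₀ ≤ μ :=
  le_trans (Finset.single_le_sum (fun j _ => Nat.zero_le _) hj₀) hA.1


set_option maxHeartbeats 1000000 in
/-- In the allowable multiplicity-type setting, assume the rate
condition `K/N ≥ 1/N + μ(μ+3)/((μ+1)(μ+2))`. If an integer `a ≥ 0` satisfies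
`(a+1)(S - (a/2)(K-1)) > C` and `a(K-1) < S ≤ (a+1)(K-1)` for some error pattern
`x ∈ {0,…,ℓ}^N` and erasure pattern `x̂ ∈ {1,…,T}^N` with score `S` and cost `C`,
then `a = μ`. -/
theorem stmt_9 (μ ℓ T N K : ℕ) (hμ : 1 ≤ μ) (hℓ : 1 ≤ ℓ) (hT : 1 ≤ T) (hN : 1 ≤ N)
    (hK : 1 ≤ K) (m : ℕ → ℕ → ℕ)
    (hallow : ∀ k ∈ Finset.Icc 1 T, Allowable ℓ μ (fun j => m j k))
    (htype1 : ∀ j ∈ Finset.Icc 1 ℓ, m j 1 = if j = 1 then μ else 0)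
    (hrate : 1 / (N : ℚ) + (μ : ℚ) * ((μ : ℚ) + 3) / (((μ : ℚ) + 1) * ((μ : ℚ) + 2))
      ≤ (K : ℚ) / (N : ℚ))
    (x : ℕ → ℕ) (hx : ∀ i ∈ Finset.Icc 1 N, x i ≤ ℓ)
    (xhat : ℕ → ℕ) (hxhat : ∀ i ∈ Finset.Icc 1 N, xhat i ∈ Finset.Icc 1 T)
    (a : ℕ)
    (hcond : cost N ℓ m xhat
      < ((a : ℚ) + 1) * (score N m x xhat - ((a : ℚ) / 2) * ((K : ℚ) - 1)))
    (hS1 : (a : ℚ) * ((K : ℚ) - 1) < score N m x xhat)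
    (hS2 : score N m x xhat ≤ ((a : ℚ) + 1) * ((K : ℚ) - 1)) :
    a = μ := by
  set S := score N m x xhat with hSdef
  set C := cost N ℓ m xhat with hCdef
  have hN0 : (0 : ℚ) < (N : ℚ) := by exact_mod_cast hN
  have hμq : (1 : ℚ) ≤ (μ : ℚ) := by exact_mod_cast hμ
  have hKq : (1 : ℚ) ≤ (K : ℚ) := by exact_mod_cast hK
  have ha0 : (0 : ℚ) ≤ (a : ℚ) := Nat.cast_nonneg a
  -- per-position bounds
  have hterm : ∀ i ∈ Finset.Icc 1 N,
      (if 1 ≤ x i then (m (x i) (xhat i) : ℚ) else 0) ≤ (μ : ℚ) ∧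
      ((μ : ℚ) + 1) * (if 1 ≤ x i then (m (x i) (xhat i) : ℚ) else 0)
        ≤ ∑ j ∈ Finset.Icc 1 ℓ, (m j (xhat i) : ℚ) * ((m j (xhat i) : ℚ) + 1) := by
    intro i hi
    have hAk := hallow (xhat i) (hxhat i hi)
    by_cases hxi : 1 ≤ x i
    · have hxmem : x i ∈ Finset.Icc 1 ℓ := Finset.mem_Icc.mpr ⟨hxi, hx i hi⟩
      constructor
      · rw [if_pos hxi]
        exact_mod_cast score_le ℓ μ (fun j => m j (xhat i)) hAk (x i) hxmem
      · rw [if_pos hxi]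
        have := key_le ℓ μ (fun j => m j (xhat i)) hAk (x i) hxmem
        exact_mod_cast this
    · rw [if_neg hxi]
      refine ⟨by positivity, ?_⟩
      rw [mul_zero]
      apply Finset.sum_nonneg
      intro j _
      positivity
  have hS0 : (0 : ℚ) ≤ S := by
    apply Finset.sum_nonneg
    intro i _
    split <;> positivity
  have hSμ : S ≤ (N : ℚ) * (μ : ℚ) := by
    rw [hSdef, score]
    calc ∑ i ∈ Finset.Icc 1 N, (if 1 ≤ x i then (m (x i) (xhat i) : ℚ) else 0)
        ≤ ∑ i ∈ Finset.Icc 1 N, (μ : ℚ) :=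
          Finset.sum_le_sum (fun i hi => (hterm i hi).1)
      _ = (N : ℚ) * (μ : ℚ) := by
          rw [Finset.sum_const, Nat.card_Icc]
          simp [nsmul_eq_mul]
  have hCS : ((μ : ℚ) + 1) * S ≤ 2 * C := by
    rw [hSdef, hCdef, score, cost, Finset.mul_sum]
    have : (2 : ℚ) * ((1/2) * ∑ i ∈ Finset.Icc 1 N, ∑ j ∈ Finset.Icc 1 ℓ,
        (m j (xhat i) : ℚ) * ((m j (xhat i) : ℚ) + 1))
        = ∑ i ∈ Finset.Icc 1 N, ∑ j ∈ Finset.Icc 1 ℓ,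
        (m j (xhat i) : ℚ) * ((m j (xhat i) : ℚ) + 1) := by ring
    rw [this]
    exact Finset.sum_le_sum (fun i hi => (hterm i hi).2)
  clear_value S C
  -- rate rearranged
  have hrate' : (N : ℚ) * ((μ : ℚ) * ((μ : ℚ) + 3))
      ≤ ((K : ℚ) - 1) * (((μ : ℚ) + 1) * ((μ : ℚ) + 2)) := by
    have hden : (0 : ℚ) < ((μ : ℚ) + 1) * ((μ : ℚ) + 2) := by positivity
    rw [div_add_div _ _ (ne_of_gt hN0) (ne_of_gt hden),
      div_le_div_iff₀ (by positivity) hN0] at hrate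
    nlinarith [hrate, hN0]
  -- upper bound : a ≤ μ
  have haμ : a ≤ μ := by
    by_contra hgt
    push_neg at hgt
    have haq : (μ : ℚ) + 1 ≤ (a : ℚ) := by exact_mod_cast hgt
    have hK1 : (0 : ℚ) ≤ (K : ℚ) - 1 := by linarith
    nlinarith [hS1, hSμ, hrate', hN0, hμq, mul_le_mul_of_nonneg_right haq hK1]
  -- lower bound : μ ≤ a
  have hμa : μ ≤ a := by
    by_contra hlt
    push_neg at hlt
    have haq : (a : ℚ) + 1 ≤ (μ : ℚ) := by exact_mod_cast hlt
    rcases eq_or_lt_of_le hKq with hK1 | hK1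
    · rw [← hK1] at hS1 hS2; simp at hS1 hS2; linarith
    · have hK1' : (0 : ℚ) < (K : ℚ) - 1 := by linarith
      have hSpos : (0 : ℚ) < S := lt_of_le_of_lt (by positivity) hS1
      -- from hcond and hCS : (a+1 - (μ+1)/2) S > (a+1)(a/2)(K-1)
      have hmain : ((a : ℚ) + 1) * ((a : ℚ) / 2) * ((K : ℚ) - 1)
          < ((a : ℚ) + 1 - ((μ : ℚ) + 1) / 2) * S := by nlinarith [hcond, hCS]
      have hc0 : (0 : ℚ) < (a : ℚ) + 1 - ((μ : ℚ) + 1) / 2 := by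
        by_contra hc
        push_neg at hc
        nlinarith [hmain, hSpos]
      nlinarith [hmain, mul_le_mul_of_nonneg_left hS2 (le_of_lt hc0), haq, hK1']
  omega
end

section
/- In the allowable multiplicity-type setting with K ≥ 2, let θ = N/(K−1). If an integer a ≥ 0 satisfies (a+1)·(S − (a/2)(K−1)) > C and S ≤ (a+1)(K−1) for some error pattern x ∈ {0,1,…,ℓ}^N and erasure pattern x̂ ∈ {1,…,T}^N with score S and cost C, then μ ≤ a ≤ ⌈μθ − 1/2 + √(μ²θ(θ−1) + 1/4)⌉ − 1. -/
/-!
Every allowable multiplicity type satisfies `(μ+1) m_j ≤ ∑_j' m_j' (m_j' + 1)`: the left side of the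
defining inequality is `(μ+1) ∑ m - ∑ m(m+1)`, and `∑ m ≥ m_j + (#supp - 1) min`. Together with
`m_j ≤ μ` this gives `c m_j ≤ (c-μ-1) μ + ∑_j' m_j' (m_j' + 1)` for every `c ≥ μ+1`. Summed over
the positions, `c S ≤ N (c-μ-1) μ + 2C`. With `c = μ+1` this is `(μ+1) S ≤ 2C`, which against the
two hypotheses forces `μ ≤ a`; with `c = 2(a+1)` it gives `a(a+1)(K-1) < N μ (2a+1-μ)`, a quadratic
inequality in `a` whose larger root is `μθ - 1/2 + √(μ²θ(θ-1) + 1/4)`.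
-/

open Finset

namespace Allowable

variable {ℓ μ : ℕ} {m : ℕ → ℕ} {j : ℕ}

theorem apply_le (h : Allowable ℓ μ m) (hj : j ∈ Icc 1 ℓ) : m j ≤ μ :=
  (single_le_sum (fun _ _ => Nat.zero_le _) hj).trans h.1

theorem succ_mul_le_sum_mul_succ (h : Allowable ℓ μ m) (hj : j ∈ Icc 1 ℓ) :
    ((μ : ℤ) + 1) * m j ≤ ∑ j' ∈ Icc 1 ℓ, (m j' : ℤ) * (m j' + 1) := by
  obtain ⟨-, hdefect⟩ := h
  rcases Nat.eq_zero_or_pos (m j) with hz | hpos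
  · rw [hz, Nat.cast_zero, mul_zero]
    exact sum_nonneg fun _ _ => by positivity
  set F := (Icc 1 ℓ).filter fun j => m j ≠ 0
  have hjF : j ∈ F := mem_filter.mpr ⟨hj, hpos.ne'⟩
  set mn := F.inf' ⟨j, hjF⟩ m
  have hmin : minOv F m = mn := dif_pos ⟨j, hjF⟩
  rw [hmin] at hdefect
  have hsum : m j + (F.card - 1) * mn ≤ ∑ j' ∈ Icc 1 ℓ, m j' := by
    have hrest : (F.erase j).card * mn ≤ ∑ j' ∈ F.erase j, m j' := by
      simpa using card_nsmul_le_sum (F.erase j) m mn fun i hi => inf'_le m (mem_of_mem_erase hi)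
    rw [card_erase_of_mem hjF] at hrest
    calc m j + (F.card - 1) * mn ≤ ∑ j' ∈ F, m j' := by rw [← add_sum_erase F m hjF]; omega
      _ ≤ ∑ j' ∈ Icc 1 ℓ, m j' := sum_le_sum_of_subset (filter_subset _ _)
  have hsumZ : (m j : ℤ) + ((F.card : ℤ) - 1) * mn ≤ ∑ j' ∈ Icc 1 ℓ, (m j' : ℤ) := by
    have hcard : 1 ≤ F.card := card_pos.mpr ⟨j, hjF⟩
    zify [hcard] at hsum
    simpa only [Nat.cast_sum] using hsum
  have hsplit : ∑ j' ∈ Icc 1 ℓ, (m j' : ℤ) * (m j' + 1)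
      = ((μ : ℤ) + 1) * ∑ j' ∈ Icc 1 ℓ, (m j' : ℤ) - ∑ j' ∈ Icc 1 ℓ, (m j' : ℤ) * (μ - m j') := by
    rw [mul_sum, ← sum_sub_distrib]
    exact sum_congr rfl fun _ _ => by ring
  rw [hsplit]
  nlinarith [mul_le_mul_of_nonneg_left hsumZ (by positivity : (0 : ℤ) ≤ μ + 1)]

theorem mul_le_sub_mul_add_sum (h : Allowable ℓ μ m) (hj : j ∈ Icc 1 ℓ) {c : ℚ}
    (hc : (μ : ℚ) + 1 ≤ c) :
    c * m j ≤ (c - μ - 1) * μ + ∑ j' ∈ Icc 1 ℓ, (m j' : ℚ) * (m j' + 1) := by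
  have hA : ((μ : ℚ) + 1) * m j ≤ ∑ j' ∈ Icc 1 ℓ, (m j' : ℚ) * (m j' + 1) := by
    exact_mod_cast h.succ_mul_le_sum_mul_succ hj
  have hle : (m j : ℚ) ≤ μ := by exact_mod_cast h.apply_le hj
  nlinarith [mul_le_mul_of_nonneg_left hle (sub_nonneg.mpr hc)]

end Allowable

section Patterns

variable {N ℓ μ : ℕ} {m : ℕ → ℕ → ℕ} {x xhat : ℕ → ℕ}

theorem score_nonneg : 0 ≤ score N m x xhat :=
  sum_nonneg fun _ _ => by split_ifs <;> positivity

theorem mul_score_le_cost (hallow : ∀ i ∈ Icc 1 N, Allowable ℓ μ fun j => m j (xhat i))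
    (hx : ∀ i ∈ Icc 1 N, x i ≤ ℓ) {c : ℚ} (hc : (μ : ℚ) + 1 ≤ c) :
    c * score N m x xhat ≤ N * ((c - μ - 1) * μ) + 2 * cost N ℓ m xhat := by
  have hterm : ∀ i ∈ Icc 1 N,
      c * (if 1 ≤ x i then (m (x i) (xhat i) : ℚ) else 0)
        ≤ (c - μ - 1) * μ + ∑ j ∈ Icc 1 ℓ, (m j (xhat i) : ℚ) * (m j (xhat i) + 1) := by
    intro i hi
    split_ifs with hxi
    · exact (hallow i hi).mul_le_sub_mul_add_sum (mem_Icc.mpr ⟨hxi, hx i hi⟩) hc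
    · rw [mul_zero]
      exact add_nonneg (mul_nonneg (by linarith) (Nat.cast_nonneg _))
        (sum_nonneg fun _ _ => by positivity)
  calc c * score N m x xhat
      ≤ ∑ i ∈ Icc 1 N, ((c - μ - 1) * μ
          + ∑ j ∈ Icc 1 ℓ, (m j (xhat i) : ℚ) * (m j (xhat i) + 1)) := by
        rw [score, mul_sum]; exact sum_le_sum hterm
    _ = N * ((c - μ - 1) * μ) + 2 * cost N ℓ m xhat := by
        rw [sum_add_distrib, sum_const, Nat.card_Icc, nsmul_eq_mul, cost]
        push_cast; ring

end Patterns

theorem lt_sub_add_sqrt_of_mul_lt {a μ θ : ℝ} (h : a * (a + 1) < μ * θ * (2 * a + 1 - μ)) :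
    a < μ * θ - 1 / 2 + √(μ ^ 2 * θ * (θ - 1) + 1 / 4) := by
  have hsq : (a + 1 / 2 - μ * θ) ^ 2 < μ ^ 2 * θ * (θ - 1) + 1 / 4 := by nlinarith
  have habs : |a + 1 / 2 - μ * θ| < √(μ ^ 2 * θ * (θ - 1) + 1 / 4) := by
    rw [← Real.sqrt_sq_eq_abs]; exact Real.sqrt_lt_sqrt (sq_nonneg _) hsq
  linarith [le_abs_self (a + 1 / 2 - μ * θ)]

theorem stmt_10_general (μ ℓ T N K : ℕ)
    (hK : 2 ≤ K) (m : ℕ → ℕ → ℕ)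
    (hallow : ∀ k ∈ Finset.Icc 1 T, Allowable ℓ μ (fun j => m j k))
    (x : ℕ → ℕ) (hx : ∀ i ∈ Finset.Icc 1 N, x i ≤ ℓ)
    (xhat : ℕ → ℕ) (hxhat : ∀ i ∈ Finset.Icc 1 N, xhat i ∈ Finset.Icc 1 T)
    (a : ℕ)
    (hcond : cost N ℓ m xhat
      < ((a : ℚ) + 1) * (score N m x xhat - ((a : ℚ) / 2) * ((K : ℚ) - 1)))
    (hS : score N m x xhat ≤ ((a : ℚ) + 1) * ((K : ℚ) - 1)) :
    μ ≤ a ∧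
      (a : ℤ) ≤
        ⌈(μ : ℝ) * ((N : ℝ) / ((K : ℝ) - 1)) - 1 / 2 +
            Real.sqrt ((μ : ℝ) ^ 2 * ((N : ℝ) / ((K : ℝ) - 1)) *
              (((N : ℝ) / ((K : ℝ) - 1)) - 1) + 1 / 4)⌉ - 1 := by
  have hallow' : ∀ i ∈ Icc 1 N, Allowable ℓ μ fun j => m j (xhat i) :=
    fun i hi => hallow _ (hxhat i hi)
  have hS0 : 0 ≤ score N m x xhat := score_nonneg
  have haS := mul_le_mul_of_nonneg_left hS (Nat.cast_nonneg (α := ℚ) a)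
  have hlow := mul_score_le_cost hallow' hx (le_refl ((μ : ℚ) + 1))
  have hμa : μ ≤ a := by
    have : (μ : ℚ) < a + 1 := by nlinarith
    exact Nat.lt_succ_iff.mp (by exact_mod_cast this)
  have hμaQ : (μ : ℚ) ≤ a := by exact_mod_cast hμa
  have hup := mul_score_le_cost hallow' hx (c := 2 * ((a : ℚ) + 1)) (by linarith)
  have key : ((a : ℚ) * (a + 1) * (K - 1) : ℚ) < N * μ * (2 * a + 1 - μ) := by nlinarith
  have hK1 : (0 : ℝ) < (K : ℝ) - 1 := by
    have : (2 : ℝ) ≤ K := by exact_mod_cast hK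
    linarith
  have hquad : (a : ℝ) * (a + 1) < μ * (N / (K - 1)) * (2 * a + 1 - μ) := by
    have keyR : ((a : ℝ) * (a + 1) * (K - 1) : ℝ) < N * μ * (2 * a + 1 - μ) := by
      exact_mod_cast key
    rw [← mul_lt_mul_iff_of_pos_right hK1]
    field_simp
    linarith
  refine ⟨hμa, Int.le_sub_one_of_lt (Int.lt_ceil.mpr ?_)⟩
  exact_mod_cast lt_sub_add_sqrt_of_mul_lt hquad

/-- In the allowable multiplicity-type setting with `K ≥ 2`, let
`θ = N/(K-1)`. If an integer `a ≥ 0` satisfies `(a+1)(S - (a/2)(K-1)) > C` and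
`S ≤ (a+1)(K-1)` for some error pattern `x ∈ {0,…,ℓ}^N` and erasure pattern
`x̂ ∈ {1,…,T}^N` with score `S` and cost `C`, then
`μ ≤ a ≤ ⌈μθ - 1/2 + √(μ²θ(θ-1) + 1/4)⌉ - 1`. -/
theorem stmt_10 (μ ℓ T N K : ℕ) (hμ : 1 ≤ μ) (hℓ : 1 ≤ ℓ) (hT : 1 ≤ T) (hN : 1 ≤ N)
    (hK : 2 ≤ K) (m : ℕ → ℕ → ℕ)
    (hallow : ∀ k ∈ Finset.Icc 1 T, Allowable ℓ μ (fun j => m j k))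
    (htype1 : ∀ j ∈ Finset.Icc 1 ℓ, m j 1 = if j = 1 then μ else 0)
    (x : ℕ → ℕ) (hx : ∀ i ∈ Finset.Icc 1 N, x i ≤ ℓ)
    (xhat : ℕ → ℕ) (hxhat : ∀ i ∈ Finset.Icc 1 N, xhat i ∈ Finset.Icc 1 T)
    (a : ℕ)
    (hcond : cost N ℓ m xhat
      < ((a : ℚ) + 1) * (score N m x xhat - ((a : ℚ) / 2) * ((K : ℚ) - 1)))
    (hS : score N m x xhat ≤ ((a : ℚ) + 1) * ((K : ℚ) - 1)) :
    μ ≤ a ∧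
      (a : ℤ) ≤
        ⌈(μ : ℝ) * ((N : ℝ) / ((K : ℝ) - 1)) - 1 / 2 +
            Real.sqrt ((μ : ℝ) ^ 2 * ((N : ℝ) / ((K : ℝ) - 1)) *
              (((N : ℝ) / ((K : ℝ) - 1)) - 1) + 1 / 4)⌉ - 1 :=
  stmt_10_general μ ℓ T N K hK m hallow x hx xhat hxhat a hcond hS
end

section
/- Let N ≥ 1, K ≥ 2, μ ≥ 1 be integers, let θ = N/(K−1), and for an integer a ≥ 1 set D_a = μ(2a+1−μ)·N/(a(a+1)) − K + 1. If a > (1/2)·(√(1 + 4θμ(μ+1)) − 3), then D_a > ((a+1)/a)·D_{a+1}. -/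
/-- The distortion threshold `D_a = μ(2a+1-μ)·N/(a(a+1)) - K + 1`. -/
noncomputable def Dthr (N K μ a : ℕ) : ℝ :=
  (μ : ℝ) * (2 * (a : ℝ) + 1 - (μ : ℝ)) * (N : ℝ) / ((a : ℝ) * ((a : ℝ) + 1))
    - (K : ℝ) + 1

/-- Let `N ≥ 1`, `K ≥ 2`, `μ ≥ 1` be integers, `θ = N/(K-1)`, and
for integer `a ≥ 1` set `D_a = μ(2a+1-μ)N/(a(a+1)) - K + 1`. If
`a > (1/2)(√(1 + 4θμ(μ+1)) - 3)`, then `D_a > ((a+1)/a) D_{a+1}`. -/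
theorem stmt_12 (N K μ a : ℕ) (hN : 1 ≤ N) (hK : 2 ≤ K) (hμ : 1 ≤ μ) (ha : 1 ≤ a)
    (hcond : (1 / 2 : ℝ) *
        (Real.sqrt (1 + 4 * ((N : ℝ) / ((K : ℝ) - 1)) * (μ : ℝ) * ((μ : ℝ) + 1)) - 3)
      < (a : ℝ)) :
    (((a : ℝ) + 1) / (a : ℝ)) * Dthr N K μ (a + 1) < Dthr N K μ a := by
  have hN' : (1 : ℝ) ≤ (N : ℝ) := by exact_mod_cast hN
  have hK' : (2 : ℝ) ≤ (K : ℝ) := by exact_mod_cast hK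
  have hμ' : (1 : ℝ) ≤ (μ : ℝ) := by exact_mod_cast hμ
  have ha' : (1 : ℝ) ≤ (a : ℝ) := by exact_mod_cast ha
  have hKm : (0 : ℝ) < (K : ℝ) - 1 := by linarith
  have hsq : Real.sqrt (1 + 4 * ((N : ℝ) / ((K : ℝ) - 1)) * (μ : ℝ) * ((μ : ℝ) + 1))
      < 2 * (a : ℝ) + 3 := by linarith
  have h2 : 1 + 4 * ((N : ℝ) / ((K : ℝ) - 1)) * (μ : ℝ) * ((μ : ℝ) + 1)
      < (2 * (a : ℝ) + 3) ^ 2 :=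
    (Real.sqrt_lt' (by linarith)).mp hsq
  have key : (N : ℝ) * (μ : ℝ) * ((μ : ℝ) + 1)
      < ((K : ℝ) - 1) * ((a : ℝ) + 1) * ((a : ℝ) + 2) := by
    have h3 : (N : ℝ) / ((K : ℝ) - 1) * ((μ : ℝ) * ((μ : ℝ) + 1))
        < ((a : ℝ) + 1) * ((a : ℝ) + 2) := by nlinarith
    rw [div_mul_eq_mul_div, div_lt_iff₀ hKm] at h3
    nlinarith [h3]
  have ha0 : (0 : ℝ) < (a : ℝ) := by linarith
  simp only [Dthr, Nat.cast_add, Nat.cast_one]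
  rw [← sub_pos]
  have heq : (μ : ℝ) * (2 * (a : ℝ) + 1 - (μ : ℝ)) * (N : ℝ) / ((a : ℝ) * ((a : ℝ) + 1))
      - (K : ℝ) + 1
      - (((a : ℝ) + 1) / (a : ℝ) *
        ((μ : ℝ) * (2 * ((a : ℝ) + 1) + 1 - (μ : ℝ)) * (N : ℝ)
          / (((a : ℝ) + 1) * ((a : ℝ) + 1 + 1)) - (K : ℝ) + 1))
      = (((K : ℝ) - 1) * ((a : ℝ) + 1) * ((a : ℝ) + 2) - (N : ℝ) * (μ : ℝ) * ((μ : ℝ) + 1))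
        / ((a : ℝ) * ((a : ℝ) + 1) * ((a : ℝ) + 2)) := by
    field_simp
    ring
  rw [heq]
  apply div_pos (by linarith) (by positivity)
end
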